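/- Let n be a positive integer and let s : ℝ⁴ⁿ → ℝ⁴ⁿ be the linear map s(x, y, ξ, η) = (x − η/2, y − ξ/2, y + ξ/2, x + η/2) for x, y, ξ, η ∈ ℝⁿ. Then: (1) s is symplectic, i.e. σ(s(Z), s(Z')) = σ(Z, Z') for all Z, Z' ∈ ℝ⁴ⁿ, where σ((x,y,ξ,η),(x',y',ξ',η')) = ξ·x' + η·y' − ξ'·x − η'·y; and (2) for every function a : ℝ²ⁿ → ℂ and all (x, y, ξ, η), one has (a ⊗ 1)(s(x,y,ξ,η)) = a(x − η/2, y + ξ/2), where (a ⊗ 1)(x,y,ξ,η) = a(x,ξ). In other words, the Weyl symbol a(x − η/2, y + ξ/2) of the Bopp operator a⋆ is the symplectic dimensional extension (a ⊗ 1)∘s of a. -/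

import Mathlib

noncomputable section

/-- Euclidean dot product on `ℝⁿ`. -/
def dotR {n : ℕ} (a b : Fin n → ℝ) : ℝ := ∑ i, a i * b i

/-- The linear map `s(x, y, ξ, η) = (x − η/2, y − ξ/2, y + ξ/2, x + η/2)` on `ℝ⁴ⁿ`. -/
def sBopp (n : ℕ) :
    (Fin n → ℝ) × (Fin n → ℝ) × (Fin n → ℝ) × (Fin n → ℝ) →
      (Fin n → ℝ) × (Fin n → ℝ) × (Fin n → ℝ) × (Fin n → ℝ) :=
  fun z =>
    (z.1 - (2⁻¹ : ℝ) • z.2.2.2, z.2.1 - (2⁻¹ : ℝ) • z.2.2.1,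
     z.2.1 + (2⁻¹ : ℝ) • z.2.2.1, z.1 + (2⁻¹ : ℝ) • z.2.2.2)

/-- The standard symplectic form on `ℝ⁴ⁿ` in coordinates `(x, y, ξ, η)`:
`σ((x,y,ξ,η),(x',y',ξ',η')) = ξ·x' + η·y' − ξ'·x − η'·y`. -/
def sigmaBopp (n : ℕ) :
    (Fin n → ℝ) × (Fin n → ℝ) × (Fin n → ℝ) × (Fin n → ℝ) →
      (Fin n → ℝ) × (Fin n → ℝ) × (Fin n → ℝ) × (Fin n → ℝ) → ℝ :=
  fun z z' =>
    dotR z.2.2.1 z'.1 + dotR z.2.2.2 z'.2.1 - dotR z'.2.2.1 z.1 - dotR z'.2.2.2 z.2.1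

/-- The trivial extension `a ⊗ 1` of a function `a` on `ℝ²ⁿ` (variables `(x,ξ)`)
to `ℝ⁴ⁿ`: `(a ⊗ 1)(x,y,ξ,η) = a(x,ξ)`. -/
def trivExtN {n : ℕ} (a : (Fin n → ℝ) → (Fin n → ℝ) → ℂ) :
    (Fin n → ℝ) × (Fin n → ℝ) × (Fin n → ℝ) × (Fin n → ℝ) → ℂ :=
  fun z => a z.1 z.2.2.1

theorem sigmaBopp_sBopp (n : ℕ) (z z' : (Fin n → ℝ) × (Fin n → ℝ) × (Fin n → ℝ) × (Fin n → ℝ)) :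
    sigmaBopp n (sBopp n z) (sBopp n z') = sigmaBopp n z z' := by
  simp only [sigmaBopp, sBopp, dotR, Pi.add_apply, Pi.sub_apply, Pi.smul_apply, smul_eq_mul,
    ← Finset.sum_add_distrib, ← Finset.sum_sub_distrib]
  exact Finset.sum_congr rfl fun i _ => by ring

theorem trivExtN_sBopp {n : ℕ} (a : (Fin n → ℝ) → (Fin n → ℝ) → ℂ) (x y ξ η : Fin n → ℝ) :
    trivExtN a (sBopp n (x, y, ξ, η)) = a (x - (2⁻¹ : ℝ) • η) (y + (2⁻¹ : ℝ) • ξ) :=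
  rfl

theorem stmt16_general (n : ℕ) :
    (∀ z z' : (Fin n → ℝ) × (Fin n → ℝ) × (Fin n → ℝ) × (Fin n → ℝ),
      sigmaBopp n (sBopp n z) (sBopp n z') = sigmaBopp n z z') ∧
    (∀ (a : (Fin n → ℝ) → (Fin n → ℝ) → ℂ) (x y ξ η : Fin n → ℝ),
      trivExtN a (sBopp n (x, y, ξ, η)) = a (x - (2⁻¹ : ℝ) • η) (y + (2⁻¹ : ℝ) • ξ)) :=
  ⟨sigmaBopp_sBopp n, trivExtN_sBopp⟩

/-- The map `s(x,y,ξ,η) = (x − η/2, y − ξ/2, y + ξ/2, x + η/2)` on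
`ℝ⁴ⁿ` is symplectic, and for every `a : ℝ²ⁿ → ℂ` one has
`(a ⊗ 1)(s(x,y,ξ,η)) = a(x − η/2, y + ξ/2)`: the Weyl symbol of the Bopp operator
`a⋆` is the symplectic dimensional extension `(a ⊗ 1) ∘ s` of `a`. -/
theorem stmt16 (n : ℕ) (hn : 0 < n) :
    (∀ z z' : (Fin n → ℝ) × (Fin n → ℝ) × (Fin n → ℝ) × (Fin n → ℝ),
      sigmaBopp n (sBopp n z) (sBopp n z') = sigmaBopp n z z') ∧
    (∀ (a : (Fin n → ℝ) → (Fin n → ℝ) → ℂ) (x y ξ η : Fin n → ℝ),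
      trivExtN a (sBopp n (x, y, ξ, η)) = a (x - (2⁻¹ : ℝ) • η) (y + (2⁻¹ : ℝ) • ξ)) :=
  stmt16_general n
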